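/- arXiv:1305.4651 — 3 statements merged into one kernel-verified Lean document; each statement's English description precedes it below -/
import Mathlib

section
/- If X is an exponentially distributed random variable with rate parameter 1/r (mean r > 0), κ > 0, and a > 0, then E[X / (κ X + a)] = (1/κ)(1 − (a/(κ r)) e^{a/(κ r)} E₁(a/(κ r))), where E₁(x) = ∫₁^∞ e^{−t x}/t dt is the exponential integral. -/
open MeasureTheory

/-- The exponential integral `E₁(x) = ∫₁^∞ e^{−tx}/t dt`. -/
noncomputable def expInt (x : ℝ) : ℝ := ∫ t in Set.Ici (1 : ℝ), Real.exp (-(t * x)) / t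

/-!
Substituting `x = r u` turns the expectation into `(1/κ) ∫₀^∞ u/(u+b) e^{-u} du` with
`b = a/(κr)`. Writing `u/(u+b) = 1 - b/(u+b)`, it remains to compute
`∫₀^∞ e^{-u}/(u+b) du`, which the shift `s = u + b` turns into
`e^b ∫_b^∞ e^{-s}/s ds = e^b E₁(b)`.
-/

open Set Real

theorem setIntegral_Ioi_comp_add_right {E : Type*} [NormedAddCommGroup E] [NormedSpace ℝ E]
    (f : ℝ → E) (c d : ℝ) :
    ∫ x in Ioi c, f (x + d) = ∫ x in Ioi (c + d), f x := by
  simpa [preimage_add_const_Ioi] using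
    (measurePreserving_add_right (volume : Measure ℝ) d).setIntegral_preimage_emb
      (MeasurableEquiv.addRight d).measurableEmbedding f (Ioi (c + d))

section

variable {b : ℝ}

theorem expInt_eq_integral_Ioi (hb : 0 < b) :
    expInt b = ∫ s in Ioi b, exp (-s) / s := by
  have hscale := integral_comp_mul_right_Ioi (fun s => exp (-s) / s) 1 hb
  rw [one_mul, smul_eq_mul] at hscale
  have hrescale :
      ∫ t in Ioi 1, exp (-(t * b)) / t = b * ∫ t in Ioi 1, exp (-(t * b)) / (t * b) := by
    rw [← integral_const_mul]
    refine setIntegral_congr_fun measurableSet_Ioi fun t ht => ?_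
    have ht0 : t ≠ 0 := (zero_lt_one.trans ht).ne'
    field_simp
  rw [expInt, integral_Ici_eq_integral_Ioi, hrescale, hscale, mul_inv_cancel_left₀ hb.ne']

theorem integral_Ioi_exp_neg_div_add (hb : 0 < b) :
    ∫ u in Ioi 0, exp (-u) / (u + b) = exp b * expInt b := by
  rw [expInt_eq_integral_Ioi hb, ← integral_const_mul, ← zero_add b,
    ← setIntegral_Ioi_comp_add_right, zero_add]
  refine setIntegral_congr_fun measurableSet_Ioi fun u _ => ?_
  rw [neg_add, exp_add, mul_div_assoc', mul_left_comm, ← exp_add, add_neg_cancel, exp_zero,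
    mul_one]

theorem integrableOn_exp_neg_div_add (hb : 0 < b) :
    IntegrableOn (fun u => exp (-u) / (u + b)) (Ioi 0) := by
  refine ((integrableOn_exp_neg_Ioi 0).const_mul b⁻¹).mono'
    (by fun_prop : Measurable _).aestronglyMeasurable ?_
  filter_upwards [ae_restrict_mem measurableSet_Ioi] with u (hu : 0 < u)
  rw [norm_of_nonneg (by positivity), div_eq_inv_mul]
  gcongr
  linarith

theorem integral_Ioi_div_add_mul_exp_neg (hb : 0 < b) :
    ∫ u in Ioi 0, u / (u + b) * exp (-u) = 1 - b * exp b * expInt b := by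
  have hsplit : ∀ u ∈ Ioi (0 : ℝ),
      u / (u + b) * exp (-u) = exp (-u) - b * (exp (-u) / (u + b)) :=
    fun u (hu : 0 < u) => by field_simp; ring
  rw [setIntegral_congr_fun measurableSet_Ioi hsplit,
    integral_sub (integrableOn_exp_neg_Ioi 0) ((integrableOn_exp_neg_div_add hb).const_mul b),
    integral_exp_neg_Ioi_zero, integral_const_mul, integral_Ioi_exp_neg_div_add hb, mul_assoc]

end

/-- if `X` is exponential with mean `r > 0` (density
`(1/r)e^{−x/r}` on `(0,∞)`), `κ > 0` and `a > 0`, then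
`E[X/(κX+a)] = (1/κ)(1 − (a/(κr)) e^{a/(κr)} E₁(a/(κr)))`. -/
theorem exponential_expectation_expInt (r κ a : ℝ) (hr : 0 < r) (hκ : 0 < κ) (ha : 0 < a) :
    ∫ x in Set.Ioi (0 : ℝ), (x / (κ * x + a)) * ((1 / r) * Real.exp (-(x / r)))
      = (1 / κ) * (1 - (a / (κ * r)) * Real.exp (a / (κ * r)) * expInt (a / (κ * r))) := by
  set b := a / (κ * r)
  have hb : 0 < b := by positivity
  have hscaled : ∀ u ∈ Ioi (0 : ℝ), r * u / (κ * (r * u) + a) * (1 / r * exp (-(r * u / r)))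
      = r⁻¹ * (1 / κ * (u / (u + b) * exp (-u))) := fun u (hu : 0 < u) => by
    rw [mul_div_cancel_left₀ u hr.ne']
    simp only [b]
    field_simp
  rw [← mul_zero r, ← integral_comp_mul_left_Ioi' _ _ hr, smul_eq_mul,
    setIntegral_congr_fun measurableSet_Ioi hscaled, integral_const_mul, integral_const_mul,
    mul_inv_cancel_left₀ hr.ne', integral_Ioi_div_add_mul_exp_neg hb]
end

section
/- Let G(p) = Σ_{i=1}^{N} (1/κ_t)(1 − (σ²/(p κ_t r_i)) E₁(σ²/(p κ_t r_i)) e^{σ²/(p κ_t r_i)}) with r_i > 0, κ_t, σ² > 0. Then G(p) → N/κ_t as p → ∞, and consequently log₂(1 + G(p)/(1 + κ_r G(p))) → log₂(1 + N/(κ_t + κ_r N)) as p → ∞ for any κ_r ≥ 0. -/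
open MeasureTheory Filter

/-!
Each summand of `G(p)` is `(1/κ_t)(1 - x E₁(x) eˣ)` with `x = σ²/(p κ_t rᵢ) → 0⁺`, so everything
rests on `x E₁(x) eˣ → 0` as `x → 0⁺`. Since `√u ≤ eᵘ`, the integrand of `E₁(x)` is at most
`t^{-3/2} / √x`, whence `E₁(x) ≤ C / √x` and `x E₁(x) eˣ ≤ C √x eˣ → 0`. The second limit follows
by continuity of `g ↦ log₂(1 + g/(1 + κ_r g))` at `N/κ_t ≥ 0`.
-/

open Topology

namespace Real

lemma sqrt_le_exp (u : ℝ) : √u ≤ exp u := by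
  rcases le_or_gt u 0 with hu | hu
  · rw [sqrt_eq_zero_of_nonpos hu]; exact (exp_pos u).le
  · nlinarith [sq_sqrt hu.le, sqrt_nonneg u, add_one_le_exp u]

lemma exp_neg_mul_div_le {t x : ℝ} (ht : 0 < t) (hx : 0 < x) :
    exp (-(t * x)) / t ≤ t ^ (-(3 : ℝ) / 2) / √x := by
  have hexp : exp (-(t * x)) ≤ (√t * √x)⁻¹ := by
    rw [exp_neg, ← sqrt_mul ht.le]
    exact inv_anti₀ (sqrt_pos.2 (mul_pos ht hx)) (sqrt_le_exp _)
  have hpow : t ^ (-(3 : ℝ) / 2) = (t * √t)⁻¹ := by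
    rw [show -(3 : ℝ) / 2 = -(1 + 1 / 2) by norm_num, rpow_neg ht.le, rpow_add ht, rpow_one,
      ← sqrt_eq_rpow]
  calc exp (-(t * x)) / t ≤ (√t * √x)⁻¹ / t := by gcongr
    _ = t ^ (-(3 : ℝ) / 2) / √x := by rw [hpow]; field_simp

end Real

lemma expInt_nonneg (x : ℝ) : 0 ≤ expInt x :=
  setIntegral_nonneg measurableSet_Ici fun _ ht =>
    div_nonneg (Real.exp_pos _).le (zero_le_one.trans ht)

lemma expInt_le_div_sqrt {x : ℝ} (hx : 0 < x) :
    expInt x ≤ (∫ t in Set.Ici (1 : ℝ), t ^ (-(3 : ℝ) / 2)) / √x := by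
  have hbound : ∀ t ∈ Set.Ici (1 : ℝ), Real.exp (-(t * x)) / t ≤ t ^ (-(3 : ℝ) / 2) / √x :=
    fun t ht => Real.exp_neg_mul_div_le (zero_lt_one.trans_le ht) hx
  have hmajorant : IntegrableOn (fun t : ℝ => t ^ (-(3 : ℝ) / 2) / √x) (Set.Ici 1) := by
    rw [integrableOn_Ici_iff_integrableOn_Ioi]
    exact (integrableOn_Ioi_rpow_of_lt (by norm_num) one_pos).div_const _
  have hintegrand : IntegrableOn (fun t : ℝ => Real.exp (-(t * x)) / t) (Set.Ici 1) := by
    refine hmajorant.mono' (by fun_prop : Measurable _).aestronglyMeasurable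
      ((ae_restrict_iff' measurableSet_Ici).2 ?_)
    refine .of_forall fun t ht => ?_
    rw [Real.norm_of_nonneg (div_nonneg (Real.exp_pos _).le (zero_le_one.trans ht))]
    exact hbound t ht
  rw [← integral_div]
  exact setIntegral_mono_on hintegrand hmajorant measurableSet_Ici hbound

lemma tendsto_mul_expInt_mul_exp_nhdsGT_zero :
    Tendsto (fun x => x * expInt x * Real.exp x) (𝓝[>] 0) (𝓝 0) := by
  set C : ℝ := ∫ t in Set.Ici (1 : ℝ), t ^ (-(3 : ℝ) / 2)
  have hmajorant : Tendsto (fun x : ℝ => C * √x * Real.exp x) (𝓝[>] 0) (𝓝 0) := by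
    refine tendsto_nhdsWithin_of_tendsto_nhds ?_
    simpa using (by fun_prop : Continuous fun x : ℝ => C * √x * Real.exp x).tendsto 0
  refine tendsto_of_tendsto_of_tendsto_of_le_of_le' tendsto_const_nhds hmajorant ?_ ?_
  · filter_upwards [self_mem_nhdsWithin] with x (hx : 0 < x)
    have := expInt_nonneg x
    positivity
  · filter_upwards [self_mem_nhdsWithin] with x (hx : 0 < x)
    calc x * expInt x * Real.exp x ≤ x * (C / √x) * Real.exp x := by
          gcongr; exact expInt_le_div_sqrt hx
      _ = C * √x * Real.exp x := by rw [mul_div_left_comm, Real.div_sqrt, mul_comm]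

lemma Filter.Tendsto.const_div_atTop_nhdsGT_zero {α : Type*} {l : Filter α} {f : α → ℝ}
    {c : ℝ} (hc : 0 < c) (hf : Tendsto f l atTop) :
    Tendsto (fun a => c / f a) l (𝓝[>] 0) :=
  tendsto_nhdsWithin_iff.2
    ⟨hf.const_div_atTop c, (hf.eventually_gt_atTop 0).mono fun _ ha => div_pos hc ha⟩

lemma div_div_one_add_mul_div {a b : ℝ} (c : ℝ) (hb : b ≠ 0) :
    a / b / (1 + c * (a / b)) = a / (b + c * a) := by
  rw [mul_div_assoc', one_add_div hb, div_div_div_cancel_right₀ hb]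

theorem capacity_upper_bound_high_power_general
    (N : ℕ) (r : Fin N → ℝ) (hr : ∀ i, 0 < r i)
    (κt σ2 : ℝ) (hκt : 0 < κt) (hσ : 0 < σ2) (κr : ℝ) (hκr : 0 ≤ κr)
    (G : ℝ → ℝ)
    (hG : G = fun p => ∑ i, (1 / κt) *
        (1 - (σ2 / (p * κt * r i)) * expInt (σ2 / (p * κt * r i))
          * Real.exp (σ2 / (p * κt * r i)))) :
    Tendsto G atTop (nhds ((N : ℝ) / κt)) ∧
    Tendsto (fun p => Real.logb 2 (1 + G p / (1 + κr * G p))) atTop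
      (nhds (Real.logb 2 (1 + (N : ℝ) / (κt + κr * N)))) := by
  have hterm (i : Fin N) : Tendsto (fun p => (1 / κt) * (1 - (σ2 / (p * κt * r i)) *
      expInt (σ2 / (p * κt * r i)) * Real.exp (σ2 / (p * κt * r i)))) atTop (𝓝 (1 / κt)) := by
    have hx := Tendsto.const_div_atTop_nhdsGT_zero hσ
      ((tendsto_id.atTop_mul_const hκt).atTop_mul_const (hr i))
    simpa using ((tendsto_mul_expInt_mul_exp_nhdsGT_zero.comp hx).const_sub 1).const_mul (1 / κt)
  have hG_lim : Tendsto G atTop (𝓝 (N / κt)) := by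
    subst hG
    simpa [div_eq_mul_one_div (N : ℝ)] using tendsto_finsetSum Finset.univ fun i _ => hterm i
  refine ⟨hG_lim, ?_⟩
  have hden : 0 < 1 + κr * (N / κt) := by positivity
  have hcont : ContinuousAt (fun g => Real.logb 2 (1 + g / (1 + κr * g))) (N / κt) :=
    ContinuousAt.logb (by fun_prop (disch := exact hden.ne')) (by positivity)
  simpa [Function.comp_def, div_div_one_add_mul_div κr hκt.ne'] using hcont.tendsto.comp hG_lim

/-- with
`G(p) = Σᵢ (1/κ_t)(1 − (σ²/(pκ_t rᵢ)) E₁(σ²/(pκ_t rᵢ)) e^{σ²/(pκ_t rᵢ)})`,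
`rᵢ > 0`, one has `G(p) → N/κ_t` as `p → ∞`, and consequently
`log₂(1 + G(p)/(1+κ_r G(p))) → log₂(1 + N/(κ_t + κ_r N))`. -/
theorem capacity_upper_bound_high_power
    (N : ℕ) (hN : 0 < N) (r : Fin N → ℝ) (hr : ∀ i, 0 < r i)
    (κt σ2 : ℝ) (hκt : 0 < κt) (hσ : 0 < σ2) (κr : ℝ) (hκr : 0 ≤ κr)
    (G : ℝ → ℝ)
    (hG : G = fun p => ∑ i, (1 / κt) *
        (1 - (σ2 / (p * κt * r i)) * expInt (σ2 / (p * κt * r i))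
          * Real.exp (σ2 / (p * κt * r i)))) :
    Tendsto G atTop (nhds ((N : ℝ) / κt)) ∧
    Tendsto (fun p => Real.logb 2 (1 + G p / (1 + κr * G p))) atTop
      (nhds (Real.logb 2 (1 + (N : ℝ) / (κt + κr * N)))) :=
  capacity_upper_bound_high_power_general N r hr κt σ2 hκt hσ κr hκr G hG
end

section
/- The sequence a_N = log₂(1 + N/(κ_t + κ_r N)) for κ_t ≥ 0, κ_r > 0 is nondecreasing in N and converges to log₂(1 + 1/κ_r) as N → ∞; in particular the asymptotic capacity ceiling is independent of the transmitter impairment level κ_t. -/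
open Filter

/-- `a_N = log₂(1 + N/(κ_t + κ_r N))` with `κ_t ≥ 0`, `κ_r > 0`
is nondecreasing in `N` and converges to `log₂(1 + 1/κ_r)`; in particular
the asymptotic capacity ceiling is independent of `κ_t`. -/
theorem capacity_ceiling_monotone_limit (κt κr : ℝ) (hκt : 0 ≤ κt) (hκr : 0 < κr) :
    Monotone (fun N : ℕ => Real.logb 2 (1 + (N : ℝ) / (κt + κr * N))) ∧
    Tendsto (fun N : ℕ => Real.logb 2 (1 + (N : ℝ) / (κt + κr * N))) atTop
      (nhds (Real.logb 2 (1 + 1 / κr))) := by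
  have hg_nonneg : ∀ N : ℕ, 0 ≤ (N : ℝ) / (κt + κr * N) := by
    intro N
    apply div_nonneg (Nat.cast_nonneg N)
    positivity
  have hgmono : Monotone (fun N : ℕ => (N : ℝ) / (κt + κr * N)) := by
    intro m n hmn
    rcases Nat.eq_zero_or_pos m with hm | hm
    · simp [hm]
      exact hg_nonneg n
    · have hm' : (0:ℝ) < m := by exact_mod_cast hm
      have hn' : (0:ℝ) < n := lt_of_lt_of_le hm' (by exact_mod_cast hmn)
      have hmn' : (m:ℝ) ≤ n := by exact_mod_cast hmn
      have hdm : (0:ℝ) < κt + κr * m := by positivity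
      have hdn : (0:ℝ) < κt + κr * n := by positivity
      rw [div_le_div_iff₀ hdm hdn]
      nlinarith
  constructor
  · intro m n hmn
    have h1 : (1:ℝ) ≤ 1 + (m : ℝ) / (κt + κr * m) := by linarith [hg_nonneg m]
    have h2 : (1:ℝ) ≤ 1 + (n : ℝ) / (κt + κr * n) := by linarith [hg_nonneg n]
    exact (Real.logb_le_logb (by norm_num) (by linarith) (by linarith)).mpr
      (by simpa using add_le_add_left (hgmono hmn) 1)
  · have h0 : Tendsto (fun N : ℕ => κt / N + κr) atTop (nhds (0 + κr)) :=
      (tendsto_const_div_atTop_nhds_zero_nat κt).add tendsto_const_nhds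
    have h1 : Tendsto (fun N : ℕ => (κt / N + κr)⁻¹) atTop (nhds κr⁻¹) := by
      simpa using h0.inv₀ (by positivity)
    have h2 : Tendsto (fun N : ℕ => (N : ℝ) / (κt + κr * N)) atTop (nhds (1 / κr)) := by
      rw [one_div]
      apply h1.congr'
      filter_upwards [eventually_ge_atTop 1] with N hN
      have hN' : (0:ℝ) < N := by exact_mod_cast hN
      field_simp
    have h3 : Tendsto (fun N : ℕ => 1 + (N : ℝ) / (κt + κr * N)) atTop
        (nhds (1 + 1 / κr)) := tendsto_const_nhds.add h2
    have hpos : (0:ℝ) < 1 + 1 / κr := by positivity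
    simp only [Real.logb]
    exact (h3.log hpos.ne').div_const _
end
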